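/- Let M be a monoid with generating set S, and let Y be the cubical complex of the generating set: Y_n is the set of functions C_n → M of the form b ↦ x_0 y_1^{b(σ(1))} x_1 y_2^{b(σ(2))} x_2 ⋯ y_n^{b(σ(n))} x_n with x_0,…,x_n ∈ M, y_1,…,y_n ∈ S, and σ a permutation of [n], and for a cube map a : C_n → C_m and f ∈ Y_m, Y(a^op)(f) = f ∘ a. Then for every n ≥ 0, U_n(Y) is isomorphic as an abelian group to ℤ[M] / J^{n+1}, where ℤ[M] is the monoid ring of M over ℤ and J is the two-sided ideal of ℤ[M] generated by the elements 1 − y for y ∈ S. -/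

import Mathlib

open CategoryTheory Opposite

/-- The combinatorial `n`-cube: functions `[n] → {0,1}`. -/
abbrev Cube (n : ℕ) := Fin n → Bool

/-- A function between combinatorial cubes is a cube map if it admits a pair `(f, s)` where
`f : [m] → [n]` is injective, `s` assigns a fixed bit to every coordinate outside the image
of `f`, every coordinate of the input is copied to its `f`-image coordinate, and every point
of the image agrees with `s` outside the image of `f`. -/
def IsCubeMap {m n : ℕ} (a : Cube m → Cube n) : Prop :=
  ∃ (f : Fin m → Fin n) (s : Fin n → Bool),
    Function.Injective f ∧
    (∀ (b : Cube m) (i : Fin m), b i = a b (f i)) ∧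
    (∀ b ∈ Set.range a, ∀ i : Fin n, (∀ j, f j ≠ i) → b i = s i)

theorem isCubeMap_id (m : ℕ) : IsCubeMap (id : Cube m → Cube m) := by
  refine ⟨id, fun _ => false, fun _ _ h => h, fun _ _ => rfl, ?_⟩
  intro b _ i hi
  exact absurd rfl (hi i)

theorem IsCubeMap.comp {m n k : ℕ} {a : Cube m → Cube n} {b : Cube n → Cube k}
    (ha : IsCubeMap a) (hb : IsCubeMap b) : IsCubeMap (b ∘ a) := by
  classical
  obtain ⟨f₁, s₁, hf₁inj, hf₁, hs₁⟩ := ha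
  obtain ⟨f₂, s₂, hf₂inj, hf₂, hs₂⟩ := hb
  refine ⟨f₂ ∘ f₁, fun i => if h : ∃ j, f₂ j = i then s₁ h.choose else s₂ i,
    hf₂inj.comp hf₁inj, ?_, ?_⟩
  · intro c i
    calc c i = a c (f₁ i) := hf₁ c i
    _ = b (a c) (f₂ (f₁ i)) := hf₂ (a c) (f₁ i)
  · rintro d ⟨c, rfl⟩ i hi
    dsimp only
    by_cases h : ∃ j, f₂ j = i
    · rw [dif_pos h]
      have h1 : a c h.choose = (b ∘ a) c (f₂ h.choose) := hf₂ (a c) h.choose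
      rw [h.choose_spec] at h1
      rw [← h1]
      refine hs₁ _ ⟨c, rfl⟩ _ ?_
      intro j hj
      exact hi j (by rw [Function.comp_apply, hj, h.choose_spec])
    · rw [dif_neg h]
      exact hs₂ _ ⟨a c, rfl⟩ i (fun j hj => h ⟨j, hj⟩)

/-- The hom set of the cube category. -/
def CubeHom (m n : ℕ) := {a : Cube m → Cube n // IsCubeMap a}

/-- Objects of the cube category `Cb` are the combinatorial `n`-cubes. -/
structure CubeCat where
  n : ℕ

/-- The object of `Cb` corresponding to the combinatorial `n`-cube. -/
def cubeObj (n : ℕ) : CubeCat := ⟨n⟩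

instance : Category CubeCat where
  Hom A B := CubeHom A.n B.n
  id A := ⟨_root_.id, isCubeMap_id A.n⟩
  comp f g := ⟨g.1 ∘ f.1, f.2.comp g.2⟩

noncomputable instance (A B : CubeCat) : Fintype (A ⟶ B) := by
  classical
  exact Subtype.fintype _

/-- A cubical complex is a contravariant functor from the cube category to `Set`. -/
abbrev CubicalComplex := CubeCatᵒᵖ ⥤ Type

/-- `|f(∅)|`: the number of `1`s in the image corner of a map from the `0`-cube. -/
def cubeWeight {n : ℕ} (f : cubeObj 0 ⟶ cubeObj (n + 1)) : ℕ :=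
  (@Finset.filter _ (fun i : Fin (n + 1) => f.1 (fun j : Fin 0 => j.elim0) i = true)
    (fun i => instDecidableEqBool _ _) Finset.univ).card

/-- The alternating sum over the corners of an `(n+1)`-cell, i.e. the relation
`∑_{f ∈ Hom(C₀, C_{n+1})} (-1)^{|f(∅)|} · X(fᵒᵖ)(c)`. -/
noncomputable def relationElt (X : CubicalComplex) (n : ℕ)
    (c : X.obj (op (cubeObj (n + 1)))) :
    FreeAbelianGroup (X.obj (op (cubeObj 0))) :=
  ∑ f : cubeObj 0 ⟶ cubeObj (n + 1),
    ((-1 : ℤ) ^ cubeWeight f) • FreeAbelianGroup.of (X.map f.op c)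

/-- The subgroup of relations of the rank `n` finite type group. -/
noncomputable def relSubgroup (X : CubicalComplex) (n : ℕ) :
    AddSubgroup (FreeAbelianGroup (X.obj (op (cubeObj 0)))) :=
  AddSubgroup.closure (Set.range (relationElt X n))

/-- The rank `n` finite type group `Uₙ(X)` of a cubical complex `X`: generated by the
`0`-cells, subject to the alternating-corner-sum relations of the `(n+1)`-cells. -/
noncomputable def UGroup (X : CubicalComplex) (n : ℕ) : Type :=
  FreeAbelianGroup (X.obj (op (cubeObj 0))) ⧸ relSubgroup X n

noncomputable instance (X : CubicalComplex) (n : ℕ) : AddCommGroup (UGroup X n) := by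
  unfold UGroup; infer_instance

/-- The generator of `Uₙ(X)` corresponding to a `0`-cell. -/
noncomputable def mkU (X : CubicalComplex) (n : ℕ) (x : X.obj (op (cubeObj 0))) : UGroup X n :=
  QuotientAddGroup.mk (FreeAbelianGroup.of x)
open CategoryTheory Opposite

/-- The `(n)`-th power of a two-sided ideal: `I⁰ = ⊤` and `I^{k+1}` is the two-sided ideal
spanned by products of an element of `I` with an element of `I^k`. -/
def tsiPow {R : Type} [Ring R] (I : TwoSidedIdeal R) : ℕ → TwoSidedIdeal R
  | 0 => ⊤
  | k + 1 => TwoSidedIdeal.span {x : R | ∃ a ∈ I, ∃ b ∈ tsiPow I k, x = a * b}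

/-- The two-sided ideal `J ⊆ ℤ[M]` generated by the elements `1 - y` for `y ∈ S`. -/
noncomputable def Jideal (M : Type) [Monoid M] (S : Set M) : TwoSidedIdeal (MonoidAlgebra ℤ M) :=
  TwoSidedIdeal.span {x : MonoidAlgebra ℤ M | ∃ y ∈ S, x = 1 - MonoidAlgebra.of ℤ M y}

/-- The quotient ring `ℤ[M]/J^{n+1}`. -/
def JQuot (M : Type) [Monoid M] (S : Set M) (n : ℕ) : Type :=
  ((tsiPow (Jideal M S) (n + 1)).ringCon).Quotient

noncomputable instance (M : Type) [Monoid M] (S : Set M) (n : ℕ) : Ring (JQuot M S n) := by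
  unfold JQuot; infer_instance

/-- The quotient map `ℤ[M] → ℤ[M]/J^{n+1}`. -/
noncomputable def JQuotMk (M : Type) [Monoid M] (S : Set M) (n : ℕ) :
    MonoidAlgebra ℤ M →+* JQuot M S n :=
  RingCon.mk' _

/-- The condition that `φ : Cₙ → M` has the word form
`b ↦ x₀ y₁^{b(σ(1))} x₁ y₂^{b(σ(2))} ⋯ yₙ^{b(σ(n))} xₙ` with the `yᵢ` in the generating set
`S` and `σ` a permutation of `[n]`. -/
def IsWordForm (M : Type) [Monoid M] (S : Set M) (n : ℕ) (φ : Cube n → M) : Prop :=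
  ∃ (x : Fin (n + 1) → M) (y : Fin n → M) (σ : Equiv.Perm (Fin n)),
    (∀ i, y i ∈ S) ∧
    ∀ b : Cube n,
      φ b = x 0 * (List.ofFn (fun i : Fin n => (if b (σ i) then y i else 1) * x i.succ)).prod

/-- The `n`-cells of the cubical complex of a generating set. -/
def WordForm (M : Type) [Monoid M] (S : Set M) (n : ℕ) :=
  {φ : Cube n → M // IsWordForm M S n φ}

/-!
Evaluating `0`-cells at the unique point of `C₀` identifies the free abelian group on `Y₀`
with `ℤ[M]`. Under this identification the relation of an `(n+1)`-cell
`b ↦ x₀ y₁^{b(σ 1)} x₁ ⋯ y_{n+1}^{b(σ (n+1))} x_{n+1}` is the expanded product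
`x₀ (1 - y₁) x₁ ⋯ (1 - y_{n+1}) x_{n+1}` (the permutation `σ` only reorders the corners), and
every such product comes from a cell. The additive subgroup generated by these products is a
two-sided ideal, since `x₀` and `x_{n+1}` absorb monoid elements on either side, and by
induction on `n` it is `J^{n+1}`.
-/

open scoped Finset

theorem Finset.card_filter_univ_comp_equiv {α β : Type*} [Fintype α] [Fintype β] (σ : α ≃ β)
    (p : β → Prop) [DecidablePred p] : #{a | p (σ a)} = #{b | p b} := by
  simp only [Finset.card_filter]
  exact σ.sum_comp fun b => if p b then 1 else 0

theorem List.prod_ofFn_one_sub_mul {R : Type*} [Ring R] {k : ℕ} (u w : Fin k → R) :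
    (List.ofFn fun i => (1 - u i) * w i).prod =
      ∑ b : Fin k → Bool, (-1 : ℤ) ^ #{i | b i} •
        (List.ofFn fun i => (if b i then u i else 1) * w i).prod := by
  induction k with
  | zero => simp
  | succ k ih =>
    rw [List.ofFn_succ, List.prod_cons, ih, ← (Fin.consEquiv fun _ => Bool).sum_comp,
      Fintype.sum_prod_type, Fintype.sum_bool]
    simp only [Fin.consEquiv_apply, List.ofFn_succ, List.prod_cons, Fin.cons_zero, Fin.cons_succ,
      Fin.card_filter_univ_succ', if_true, if_false, Bool.false_eq_true, pow_add, mul_smul,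
      ← mul_smul_comm, ← Finset.mul_sum, pow_one, pow_zero, neg_one_zsmul,
      Finset.sum_neg_distrib, mul_neg, sub_mul, one_mul]
    abel

theorem AddSubgroup.mul_mem_of_mem_closure {R : Type*} [NonUnitalNonAssocRing R] {A B : Set R}
    {P : AddSubgroup R} (h : ∀ a ∈ A, ∀ b ∈ B, a * b ∈ P) {x y : R}
    (hx : x ∈ closure A) (hy : y ∈ closure B) : x * y ∈ P := by
  induction hx using closure_induction with
  | mem a ha =>
    induction hy using closure_induction with
    | mem b hb => exact h a ha b hb
    | zero => simp
    | add _ _ _ _ h₁ h₂ => simpa [mul_add] using P.add_mem h₁ h₂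
    | neg _ _ h₁ => simpa using P.neg_mem h₁
  | zero => simp
  | add _ _ _ _ h₁ h₂ => simpa [add_mul] using P.add_mem h₁ h₂
  | neg _ _ h₁ => simpa using P.neg_mem h₁

namespace MonoidAlgebra

theorem addSubgroupClosure_range_of {M : Type*} [Monoid M] :
    AddSubgroup.closure (Set.range (of ℤ M)) = ⊤ := by
  rw [eq_top_iff]
  rintro x -
  induction x using MonoidAlgebra.induction_on with
  | of g => exact AddSubgroup.subset_closure ⟨g, rfl⟩
  | add f g hf hg => exact add_mem hf hg
  | smul r f hf => exact AddSubgroup.zsmul_mem _ hf r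

end MonoidAlgebra

noncomputable def FreeAbelianGroup.equivMonoidAlgebra {X M : Type} [Monoid M] (ev : X ≃ M) :
    FreeAbelianGroup X ≃+ MonoidAlgebra ℤ M :=
  (equivFinsupp X).trans ((Finsupp.domCongr ev).trans MonoidAlgebra.coeffAddEquiv.symm)

theorem FreeAbelianGroup.equivMonoidAlgebra_of {X M : Type} [Monoid M] (ev : X ≃ M) (a : X) :
    equivMonoidAlgebra ev (of a) = MonoidAlgebra.of ℤ M (ev a) := by
  simp [equivMonoidAlgebra, MonoidAlgebra.of_apply]

section BinomialWords

open MonoidAlgebra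

variable {M : Type} [Monoid M] {S : Set M} {k : ℕ}

variable (S k) in
def binomialWords : Set (MonoidAlgebra ℤ M) :=
  {r | ∃ (x : Fin (k + 1) → M) (y : Fin k → M), (∀ i, y i ∈ S) ∧
    of ℤ M (x 0) * (List.ofFn fun i => (1 - of ℤ M (y i)) * of ℤ M (x i.succ)).prod = r}

theorem binomialWords_zero : binomialWords S 0 = Set.range (of ℤ M) := by
  ext r
  constructor
  · rintro ⟨x, -, -, rfl⟩
    exact ⟨x 0, by simp⟩
  · rintro ⟨m, rfl⟩
    exact ⟨fun _ => m, Fin.elim0, fun i => i.elim0, by simp⟩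

theorem mem_binomialWords_succ {r : MonoidAlgebra ℤ M} :
    r ∈ binomialWords S (k + 1) ↔
      ∃ x, ∃ y ∈ S, ∃ t ∈ binomialWords S k, of ℤ M x * (1 - of ℤ M y) * t = r := by
  constructor
  · rintro ⟨x, y, hy, rfl⟩
    refine ⟨x 0, y 0, hy 0, _, ⟨Fin.tail x, Fin.tail y, fun i => hy i.succ, rfl⟩, ?_⟩
    simp [List.ofFn_succ, Fin.tail, mul_assoc]
  · rintro ⟨x₀, y₀, hy₀, _, ⟨x, y, hy, rfl⟩, rfl⟩
    refine ⟨Fin.cons x₀ x, Fin.cons y₀ y, Fin.cases hy₀ hy, ?_⟩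
    simp [List.ofFn_succ, mul_assoc]

theorem of_mul_mem_binomialWords (m : M) {r : MonoidAlgebra ℤ M} (hr : r ∈ binomialWords S k) :
    of ℤ M m * r ∈ binomialWords S k := by
  obtain ⟨x, y, hy, rfl⟩ := hr
  refine ⟨Fin.cons (m * x 0) (Fin.tail x), y, hy, ?_⟩
  simp only [Fin.cons_zero, Fin.cons_succ, Fin.tail, map_mul, mul_assoc]

theorem mul_of_mem_binomialWords (m : M) {r : MonoidAlgebra ℤ M} (hr : r ∈ binomialWords S k) :
    r * of ℤ M m ∈ binomialWords S k := by
  induction k generalizing r with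
  | zero =>
    rw [binomialWords_zero] at hr ⊢
    obtain ⟨x, rfl⟩ := hr
    exact ⟨x * m, map_mul ..⟩
  | succ k ih =>
    obtain ⟨x, y, hy, t, ht, rfl⟩ := mem_binomialWords_succ.mp hr
    exact mem_binomialWords_succ.mpr ⟨x, y, hy, _, ih ht, (mul_assoc ..).symm⟩

theorem mul_mem_closure_binomialWords_left (a : MonoidAlgebra ℤ M) {r : MonoidAlgebra ℤ M}
    (hr : r ∈ AddSubgroup.closure (binomialWords S k)) :
    a * r ∈ AddSubgroup.closure (binomialWords S k) := by
  refine AddSubgroup.mul_mem_of_mem_closure ?_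
    (eq_top_iff.mp addSubgroupClosure_range_of (AddSubgroup.mem_top a)) hr
  rintro _ ⟨m, rfl⟩ t ht
  exact AddSubgroup.subset_closure (of_mul_mem_binomialWords m ht)

theorem mul_mem_closure_binomialWords_right {r : MonoidAlgebra ℤ M}
    (hr : r ∈ AddSubgroup.closure (binomialWords S k)) (a : MonoidAlgebra ℤ M) :
    r * a ∈ AddSubgroup.closure (binomialWords S k) := by
  refine AddSubgroup.mul_mem_of_mem_closure ?_ hr
    (eq_top_iff.mp addSubgroupClosure_range_of (AddSubgroup.mem_top a))
  rintro t ht _ ⟨m, rfl⟩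
  exact AddSubgroup.subset_closure (mul_of_mem_binomialWords m ht)

variable (S k) in
noncomputable def binomialIdeal : TwoSidedIdeal (MonoidAlgebra ℤ M) :=
  .mk' (AddSubgroup.closure (binomialWords S k)) (zero_mem _) add_mem neg_mem
    (mul_mem_closure_binomialWords_left _) (mul_mem_closure_binomialWords_right · _)

theorem mem_binomialIdeal {r : MonoidAlgebra ℤ M} :
    r ∈ binomialIdeal S k ↔ r ∈ AddSubgroup.closure (binomialWords S k) :=
  TwoSidedIdeal.mem_mk' ..

theorem one_sub_of_mul_mem_binomialIdeal {y : M} (hy : y ∈ S) {r : MonoidAlgebra ℤ M}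
    (hr : r ∈ binomialIdeal S k) : (1 - of ℤ M y) * r ∈ binomialIdeal S (k + 1) := by
  rw [mem_binomialIdeal] at hr ⊢
  refine AddSubgroup.mul_mem_of_mem_closure (A := {1 - of ℤ M y}) ?_
    (AddSubgroup.subset_closure rfl) hr
  rintro _ rfl t ht
  exact AddSubgroup.subset_closure
    (mem_binomialWords_succ.mpr ⟨1, y, hy, t, ht, by rw [map_one, one_mul]⟩)

theorem mul_mem_binomialIdeal_succ {a r : MonoidAlgebra ℤ M} (ha : a ∈ Jideal M S)
    (hr : r ∈ binomialIdeal S k) : a * r ∈ binomialIdeal S (k + 1) := by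
  rw [Jideal, TwoSidedIdeal.mem_span_iff_mem_addSubgroup_closure] at ha
  rw [mem_binomialIdeal]
  refine AddSubgroup.mul_mem_of_mem_closure ?_ ha (AddSubgroup.subset_closure hr)
  rintro _ ⟨_, ⟨p, -, _, ⟨y, hy, rfl⟩, rfl⟩, q, -, rfl⟩ t ht
  rw [← mem_binomialIdeal, mul_assoc, mul_assoc]
  exact TwoSidedIdeal.mul_mem_left _ _ _
    (one_sub_of_mul_mem_binomialIdeal hy (TwoSidedIdeal.mul_mem_left _ _ _ ht))

theorem tsiPow_Jideal_eq_binomialIdeal (S : Set M) :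
    ∀ k, tsiPow (Jideal M S) k = binomialIdeal S k
  | 0 => by
    ext r
    simp only [tsiPow, TwoSidedIdeal.mem_top, mem_binomialIdeal, binomialWords_zero,
      addSubgroupClosure_range_of, AddSubgroup.mem_top]
  | k + 1 => by
    have ih := tsiPow_Jideal_eq_binomialIdeal S k
    apply le_antisymm
    · refine TwoSidedIdeal.span_le.mpr ?_
      rintro _ ⟨a, ha, r, hr, rfl⟩
      exact mul_mem_binomialIdeal_succ ha (ih ▸ hr)
    · intro r hr
      rw [mem_binomialIdeal] at hr
      refine AddSubgroup.closure_le (K := (tsiPow (Jideal M S) (k + 1)).asIdeal.toAddSubgroup)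
        |>.mpr ?_ hr
      intro t ht
      obtain ⟨x, y, hy, t', ht', rfl⟩ := mem_binomialWords_succ.mp ht
      refine TwoSidedIdeal.subset_span ⟨_, TwoSidedIdeal.mul_mem_left _ (of ℤ M x) _
        (TwoSidedIdeal.subset_span ⟨y, hy, rfl⟩), t', ?_, rfl⟩
      exact ih ▸ mem_binomialIdeal.mpr (AddSubgroup.subset_closure ht')

theorem ker_JQuotMk (n : ℕ) :
    (JQuotMk M S n).toAddMonoidHom.ker = AddSubgroup.closure (binomialWords S (n + 1)) := by
  ext r
  rw [AddMonoidHom.mem_ker, ← mem_binomialIdeal, ← tsiPow_Jideal_eq_binomialIdeal,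
    ← TwoSidedIdeal.ker_ringCon_mk' (tsiPow (Jideal M S) (n + 1)), TwoSidedIdeal.mem_ker]
  rfl

end BinomialWords

section CornerSum

open MonoidAlgebra

variable {M : Type} [Monoid M] {S : Set M} {k : ℕ}

noncomputable def cornerSum (φ : Cube k → M) : MonoidAlgebra ℤ M :=
  ∑ b : Cube k, (-1 : ℤ) ^ #{i | b i} • of ℤ M (φ b)

theorem cornerSum_word (x : Fin (k + 1) → M) (y : Fin k → M) (σ : Equiv.Perm (Fin k)) :
    cornerSum (fun b => x 0 * (List.ofFn fun i => (if b (σ i) then y i else 1) * x i.succ).prod) =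
      of ℤ M (x 0) * (List.ofFn fun i => (1 - of ℤ M (y i)) * of ℤ M (x i.succ)).prod := by
  rw [List.prod_ofFn_one_sub_mul, Finset.mul_sum, cornerSum,
    ← (σ.arrowCongr (Equiv.refl Bool)).sum_comp]
  refine Finset.sum_congr rfl fun b _ => ?_
  simp only [Equiv.arrowCongr_apply, Equiv.coe_refl, Function.comp_apply, id,
    Equiv.symm_apply_apply]
  rw [Finset.card_filter_univ_comp_equiv σ.symm (b · = true), mul_smul_comm, map_mul,
    map_list_prod, List.map_ofFn]
  simp only [Function.comp_def, map_mul, apply_ite (of ℤ M), map_one]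

theorem range_cornerSum :
    Set.range (fun φ : WordForm M S k => cornerSum φ.1) = binomialWords S k := by
  ext r
  constructor
  · rintro ⟨⟨φ, x, y, σ, hy, hφ⟩, rfl⟩
    exact ⟨x, y, hy, ((congrArg cornerSum (funext hφ)).trans (cornerSum_word x y σ)).symm⟩
  · rintro ⟨x, y, hy, rfl⟩
    exact ⟨⟨_, x, y, Equiv.refl _, hy, fun _ => rfl⟩, cornerSum_word x y (Equiv.refl _)⟩

end CornerSum

def cornerEquiv (n : ℕ) : (cubeObj 0 ⟶ cubeObj n) ≃ Cube n where
  toFun f := f.1 Fin.elim0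
  invFun b := ⟨fun _ => b, Fin.elim0, b, nofun, nofun, by rintro _ ⟨c, rfl⟩ i _; rfl⟩
  left_inv f := Subtype.ext (funext fun c => congrArg f.1 (Subsingleton.elim (α := Cube 0) _ c))
  right_inv _ := rfl

def wordFormZeroEquiv (M : Type) [Monoid M] (S : Set M) : WordForm M S 0 ≃ M where
  toFun φ := φ.1 Fin.elim0
  invFun m := ⟨fun _ => m, fun _ => m, Fin.elim0, Equiv.refl _, nofun, fun _ => by simp⟩
  left_inv φ := Subtype.ext (funext fun b => congrArg φ.1 (Subsingleton.elim _ b))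
  right_inv _ := rfl

theorem equivMonoidAlgebra_relationElt {M : Type} [Monoid M] {S : Set M} {Y : CubicalComplex}
    (e : ∀ k : ℕ, Y.obj (op (cubeObj k)) ≃ WordForm M S k)
    (hmap : ∀ (m k : ℕ) (a : cubeObj m ⟶ cubeObj k) (φ : Y.obj (op (cubeObj k))),
      (e m (Y.map a.op φ)).1 = (e k φ).1 ∘ a.1)
    {n : ℕ} (c : Y.obj (op (cubeObj (n + 1)))) :
    FreeAbelianGroup.equivMonoidAlgebra ((e 0).trans (wordFormZeroEquiv M S))
      (relationElt Y n c) = cornerSum (e (n + 1) c).1 := by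
  rw [relationElt, map_sum, cornerSum, ← (cornerEquiv (n + 1)).sum_comp]
  refine Finset.sum_congr rfl fun f _ => ?_
  rw [map_zsmul, FreeAbelianGroup.equivMonoidAlgebra_of]
  congr 2
  show (e 0 (Y.map f.op c)).1 Fin.elim0 = (e (n + 1) c).1 (f.1 Fin.elim0)
  rw [hmap]
  rfl

theorem monoid_complex_finite_type_general (M : Type) [Monoid M] (S : Set M)
    (Y : CubicalComplex)
    (e : ∀ k : ℕ, Y.obj (op (cubeObj k)) ≃ WordForm M S k)
    (hmap : ∀ (m k : ℕ) (a : cubeObj m ⟶ cubeObj k) (φ : Y.obj (op (cubeObj k))),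
      (e m (Y.map a.op φ)).1 = (e k φ).1 ∘ a.1)
    (n : ℕ) :
    Nonempty (UGroup Y n ≃+ JQuot M S n) := by
  let E := FreeAbelianGroup.equivMonoidAlgebra ((e 0).trans (wordFormZeroEquiv M S))
  have hrel :
      E ∘ relationElt Y n = (fun φ : WordForm M S (n + 1) => cornerSum φ.1) ∘ e (n + 1) :=
    funext (equivMonoidAlgebra_relationElt e hmap)
  have hker : (relSubgroup Y n).map E.toAddMonoidHom = (JQuotMk M S n).toAddMonoidHom.ker := by
    rw [relSubgroup, AddMonoidHom.map_closure, ker_JQuotMk, ← range_cornerSum,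
      ← (e (n + 1)).surjective.range_comp, ← hrel, Set.range_comp]
    rfl
  exact ⟨(QuotientAddGroup.congr _ _ E hker).trans
    (QuotientAddGroup.quotientKerEquivOfSurjective _ (RingCon.mk'_surjective _))⟩

/-- Let `M` be a monoid with generating set `S`, and let `Y` be the cubical
complex of the generating set: its `n`-cells are the functions `Cₙ → M` of word form, and
cube maps act by precomposition.  Then for every `n ≥ 0`, `Uₙ(Y)` is isomorphic as an abelian
group to `ℤ[M]/J^{n+1}`, where `J` is the two-sided ideal of the monoid ring `ℤ[M]` generated
by the elements `1 − y` for `y ∈ S`. -/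
theorem monoid_complex_finite_type (M : Type) [Monoid M] (S : Set M)
    (hgen : Submonoid.closure S = ⊤)
    (Y : CubicalComplex)
    (e : ∀ k : ℕ, Y.obj (op (cubeObj k)) ≃ WordForm M S k)
    (hmap : ∀ (m k : ℕ) (a : cubeObj m ⟶ cubeObj k) (φ : Y.obj (op (cubeObj k))),
      (e m (Y.map a.op φ)).1 = (e k φ).1 ∘ a.1)
    (n : ℕ) :
    Nonempty (UGroup Y n ≃+ JQuot M S n) :=
  monoid_complex_finite_type_general M S Y e hmap n
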